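/- arXiv:2409.05464 — 7 statements merged into one kernel-verified Lean document; each statement's English description precedes it below -/
import Mathlib

section
/- Let K be an algebraically closed field of characteristic 2 and a, b, c ∈ K. Then the polynomial Y⁴ + a·Z⁴ + Z³ + b·Z + c is irreducible in K[Y, Z]. -/
open Polynomial IntermediateField AdjoinRoot in
theorem X_pow_four_sub_C_irreducible_char_two {F : Type*} [Field F] [CharP F 2]
    {u : F} (hu : ¬ IsSquare u) : Irreducible (X ^ 4 - C u) := by
  have h4 : (0:ℕ) < 4 := by norm_num
  have hu0 : u ≠ 0 := by rintro rfl; exact hu ⟨0, by ring⟩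
  have hnotunit : ¬ IsUnit (X ^ 4 - C u : F[X]) := by
    rw [Polynomial.isUnit_iff_degree_eq_zero, degree_X_pow_sub_C h4]
    norm_num
  have ⟨g, hg, hg'⟩ := WfDvdMonoid.exists_irreducible_factor hnotunit (X_pow_sub_C_ne_zero h4 u)
  suffices natDegree g = 4 from (associated_of_dvd_of_natDegree_le hg'
    (X_pow_sub_C_ne_zero h4 u) (this.trans (natDegree_X_pow_sub_C (n := 4) (r := u)).symm).ge).irreducible hg
  by_contra h
  have : Fact (Irreducible g) := ⟨hg⟩
  have key : (Algebra.norm F (AdjoinRoot.root g)) ^ 4 = u ^ g.natDegree := by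
    have := eval₂_eq_zero_of_dvd_of_eval₂_eq_zero _ _ hg' (AdjoinRoot.eval₂_root g)
    rw [eval₂_sub, eval₂_pow, eval₂_C, eval₂_X, sub_eq_zero] at this
    rw [← map_pow, this, ← AdjoinRoot.algebraMap_eq, Algebra.norm_algebraMap,
      ← finrank_top', ← IntermediateField.adjoin_root_eq_top g,
      IntermediateField.adjoin.finrank,
      AdjoinRoot.minpoly_root hg.ne_zero, natDegree_mul_C]
    · simpa using hg.ne_zero
    · exact AdjoinRoot.isIntegral_root hg.ne_zero
  set N := Algebra.norm F (AdjoinRoot.root g) with hN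
  have hdle : g.natDegree ≤ 4 := by
    have := natDegree_le_of_dvd hg' (X_pow_sub_C_ne_zero h4 u)
    simpa [natDegree_X_pow_sub_C] using this
  have hdpos : 0 < g.natDegree := natDegree_pos_iff_degree_pos.mpr (Polynomial.degree_pos_of_irreducible hg)
  have hd : g.natDegree = 1 ∨ g.natDegree = 2 ∨ g.natDegree = 3 := by omega
  apply hu
  rcases hd with hd | hd | hd <;> rw [hd] at key
  · exact ⟨N ^ 2, by rw [pow_one] at key; rw [← key]; ring⟩
  · refine ⟨N, ?_⟩
    have : frobenius F 2 u = frobenius F 2 (N * N) := by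
      simp only [frobenius_def]
      rw [← key]; ring
    exact frobenius_inj F 2 this
  · have hN0 : N ≠ 0 := by
      intro hN0
      rw [hN0] at key
      exact hu0 ((pow_eq_zero_iff (by norm_num : (3:ℕ) ≠ 0)).mp (by simpa using key.symm))
    refine ⟨u ^ 2 / N ^ 2, ?_⟩
    field_simp
    linear_combination key

open MvPolynomial


/-- Over an algebraically closed field `K` of characteristic 2, the polynomial
`Y⁴ + a Z⁴ + Z³ + b Z + c` is irreducible in `K[Y, Z]` (here `Y = X 0`, `Z = X 1`). -/
theorem stmt_2 (K : Type*) [Field K] [IsAlgClosed K] [CharP K 2] (a b c : K) :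
    Irreducible ((X 0) ^ 4 + C a * (X 1) ^ 4 + (X 1) ^ 3 + C b * (X 1) + C c :
      MvPolynomial (Fin 2) K) := by
  classical
  set f : Polynomial K := Polynomial.C a * Polynomial.X ^ 4 + Polynomial.X ^ 3 +
    Polynomial.C b * Polynomial.X + Polynomial.C c with hf
  -- f is not a square in K[X]
  have hfsq : ∀ g : Polynomial K, g * g ≠ f := by
    intro g hg
    have h3 : f.coeff 3 = 1 := by
      simp [hf, Polynomial.coeff_add, Polynomial.coeff_C_mul, Polynomial.coeff_X_pow,
        Polynomial.coeff_C, Polynomial.coeff_X]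
    have h3' : (g * g).coeff 3 = 0 := by
      haveI : ExpChar K 2 := .prime Nat.prime_two
      have hexp : g ^ 2 = Polynomial.map (frobenius K 2) (Polynomial.expand K 2 g) :=
        (Polynomial.map_frobenius_expand 2 g).symm
      rw [← sq, hexp, Polynomial.coeff_map, Polynomial.coeff_expand (by norm_num : 0 < 2)]
      norm_num
    rw [hg, h3] at h3'
    exact one_ne_zero h3'
  -- pass to the fraction field of K[X]
  set F := FractionRing (Polynomial K) with hF
  haveI : CharP F 2 :=
    charP_of_injective_algebraMap (IsFractionRing.injective (Polynomial K) F) 2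
  have hFsq : ¬ IsSquare (algebraMap (Polynomial K) F f) := by
    rintro ⟨g, hg⟩
    have hint : IsIntegral (Polynomial K) g := by
      refine ⟨Polynomial.X ^ 2 - Polynomial.C f, Polynomial.monic_X_pow_sub_C f (by norm_num), ?_⟩
      simp only [Polynomial.eval₂_sub, Polynomial.eval₂_pow, Polynomial.eval₂_X,
        Polynomial.eval₂_C, sub_eq_zero, sq, Polynomial.eval₂_mul]
      exact hg.symm
    obtain ⟨g₀, rfl⟩ := IsIntegrallyClosed.isIntegral_iff.mp hint
    exact hfsq g₀ (IsFractionRing.injective (Polynomial K) F (by rw [map_mul, ← hg])).symm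
  have hirr : Irreducible (Polynomial.X ^ 4 - Polynomial.C (algebraMap (Polynomial K) F f)) :=
    X_pow_four_sub_C_irreducible_char_two hFsq
  have hmonic : (Polynomial.X ^ 4 - Polynomial.C f : Polynomial (Polynomial K)).Monic :=
    Polynomial.monic_X_pow_sub_C f (by norm_num)
  have hirr2 : Irreducible (Polynomial.X ^ 4 - Polynomial.C f : Polynomial (Polynomial K)) := by
    rw [hmonic.irreducible_iff_irreducible_map_fraction_map (K := F)]
    simpa only [Polynomial.map_sub, Polynomial.map_pow, Polynomial.map_X,
      Polynomial.map_C] using hirr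
  -- transfer along the ring equivalence MvPolynomial (Fin 2) K ≃+* (K[X])[X]
  let e₂ : MvPolynomial (Fin 1) K ≃+* Polynomial K :=
    (MvPolynomial.finSuccEquiv K 0).toRingEquiv.trans
      (Polynomial.mapEquiv (MvPolynomial.isEmptyAlgEquiv K (Fin 0)).toRingEquiv)
  let E : MvPolynomial (Fin 2) K ≃+* Polynomial (Polynomial K) :=
    (MvPolynomial.finSuccEquiv K 1).toRingEquiv.trans (Polynomial.mapEquiv e₂)
  have h01 : (X 1 : MvPolynomial (Fin 2) K) = X (Fin.succ 0) := rfl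
  have hE : E ((X 0) ^ 4 + C a * (X 1) ^ 4 + (X 1) ^ 3 + C b * (X 1) + C c) =
      Polynomial.X ^ 4 - Polynomial.C f := by
    have hsub : (Polynomial.X ^ 4 - Polynomial.C f : Polynomial (Polynomial K)) =
        Polynomial.X ^ 4 + Polynomial.C f := by
      haveI : CharP (Polynomial (Polynomial K)) 2 := inferInstance
      rw [CharTwo.sub_eq_add]
    have hX0 : E (X 0) = Polynomial.X := by
      simp [E, e₂, MvPolynomial.finSuccEquiv_X_zero, MvPolynomial.finSuccEquiv_X_succ]
    have h1 : (MvPolynomial.finSuccEquiv K 1) (X 1 : MvPolynomial (Fin 2) K)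
        = Polynomial.C (X 0) := by
      rw [h01, MvPolynomial.finSuccEquiv_X_succ]
    have hX1 : E (X 1) = Polynomial.C Polynomial.X := by
      simp [E, e₂, h1, MvPolynomial.finSuccEquiv_X_zero]
    have hCk : ∀ k : K, E (C k) = Polynomial.C (Polynomial.C k) := by
      intro k
      simp [E, e₂, MvPolynomial.finSuccEquiv_apply]
      exact MvPolynomial.coeff_zero_C k
    rw [hsub]
    simp only [map_add, map_mul, map_pow, hX0, hX1, hCk, hf, Polynomial.C_add,
      Polynomial.C_mul, Polynomial.C_pow]
    ring
  exact (MulEquiv.irreducible_iff E).mp (hE ▸ hirr2)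
end

section
/- Let k be an algebraically closed field of characteristic 2 and let a, b, c ∈ k. Set F = y⁴ + a z⁴ + x z³ + b x³ z + c x⁴ ∈ k[x, y, z]. Then the set of points (x₀ : y₀ : z₀) ∈ P²(k) at which F and all three partial derivatives ∂F/∂x, ∂F/∂y, ∂F/∂z vanish is exactly the singleton {(1 : (a b² + c)^{1/4} : b^{1/2})}, where b^{1/2}, (a b² + c)^{1/4} denote the (unique) square root and fourth root in k. -/
open MvPolynomial

noncomputable def quarticIV (k : Type*) [Field k] (a b c : k) : MvPolynomial (Fin 3) k :=
  (X 1) ^ 4 + C a * (X 2) ^ 4 + (X 0) * (X 2) ^ 3 + C b * (X 0) ^ 3 * (X 2) + C c * (X 0) ^ 4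

section aux
set_option linter.unusedSectionVars false
variable {k : Type*} [Field k] [CharP k 2] (a b c x₀ y₀ z₀ : k)

lemma char2 : (2 : k) = 0 := by exact_mod_cast CharP.cast_eq_zero k 2

lemma evalF : eval ![x₀, y₀, z₀] (quarticIV k a b c)
    = y₀^4 + a*z₀^4 + x₀*z₀^3 + b*x₀^3*z₀ + c*x₀^4 := by
  simp [quarticIV]

lemma evalD0 : eval ![x₀, y₀, z₀] (pderiv 0 (quarticIV k a b c)) = z₀^3 + b*x₀^2*z₀ := by
  simp [quarticIV]
  linear_combination (b*x₀^2*z₀ + 2*c*x₀^3) * char2 (k := k)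

lemma evalD1 : eval ![x₀, y₀, z₀] (pderiv 1 (quarticIV k a b c)) = 0 := by
  simp [quarticIV]
  exact Or.inl (by linear_combination 2 * char2 (k := k))

lemma evalD2 : eval ![x₀, y₀, z₀] (pderiv 2 (quarticIV k a b c)) = x₀*z₀^2 + b*x₀^3 := by
  simp [quarticIV]
  linear_combination (2*a*z₀^3 + x₀*z₀^2) * char2 (k := k)

lemma sq_inj {u v : k} (h : u^2 = v^2) : u = v :=
  frobenius_inj k 2 (by simpa [frobenius_def] using h)

end aux

/-- The common vanishing locus in `P²(k)` of `F = y⁴ + a z⁴ + x z³ + b x³ z + c x⁴` and all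
its partial derivatives is exactly the single projective point `(1 : (ab²+c)^{1/4} : b^{1/2})`. -/
theorem stmt_3 (k : Type*) [Field k] [IsAlgClosed k] [CharP k 2] (a b c : k)
    (γ β : k) (hγ : γ ^ 2 = b) (hβ : β ^ 4 = a * b ^ 2 + c) :
    ∀ x₀ y₀ z₀ : k, (x₀, y₀, z₀) ≠ (0, 0, 0) →
      ((eval ![x₀, y₀, z₀] (quarticIV k a b c) = 0 ∧
        ∀ i : Fin 3, eval ![x₀, y₀, z₀] (pderiv i (quarticIV k a b c)) = 0) ↔
        ∃ lam : k, lam ≠ 0 ∧ x₀ = lam ∧ y₀ = lam * β ∧ z₀ = lam * γ) := by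
  intro x₀ y₀ z₀ hne
  have h2 : (2:k) = 0 := char2
  constructor
  · rintro ⟨hF, hD⟩
    rw [evalF] at hF
    have e0 := hD 0; rw [evalD0] at e0
    have e2 := hD 2; rw [evalD2] at e2
    by_cases hx : x₀ = 0
    · subst hx
      have hz : z₀ = 0 := by
        have h3 : z₀^3 = 0 := by linear_combination e0
        exact pow_eq_zero_iff (n := 3) (by norm_num) |>.mp h3
      subst hz
      have hy : y₀ = 0 := by
        have h4 : y₀^4 = 0 := by linear_combination hF
        exact pow_eq_zero_iff (n := 4) (by norm_num) |>.mp h4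
      exact absurd (by simp [hy]) hne
    · have hz : z₀ = x₀ * γ := by
        apply sq_inj
        have hm : x₀ * (z₀^2 + b*x₀^2) = 0 := by linear_combination e2
        have h' : z₀^2 + b*x₀^2 = 0 := by
          rcases mul_eq_zero.mp hm with h | h
          · exact absurd h hx
          · exact h
        linear_combination h' + x₀^2 * hγ - x₀^2*γ^2*h2
      have hy : y₀ = x₀ * β := by
        apply sq_inj; apply sq_inj
        have h4 : y₀^4 = (x₀*β)^4 := by
          rw [hz] at hF
          linear_combination hF - x₀^4*hβ - a*x₀^4*(γ^2+b)*hγ - x₀^4*γ*hγ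
            - (b*γ + c + a*b^2)*x₀^4*h2
        linear_combination h4
      exact ⟨x₀, hx, rfl, hy, hz⟩
  · rintro ⟨lam, hlam, rfl, rfl, rfl⟩
    refine ⟨?_, ?_⟩
    · rw [evalF]
      linear_combination x₀^4*hβ + a*x₀^4*(γ^2+b)*hγ + x₀^4*γ*hγ + (b*γ+c+a*b^2)*x₀^4*h2
    · intro i
      fin_cases i
      · show eval ![x₀, x₀*β, x₀*γ] (pderiv 0 (quarticIV k a b c)) = 0
        rw [evalD0]; linear_combination x₀^3*γ*hγ + b*γ*x₀^3*h2
      · show eval ![x₀, x₀*β, x₀*γ] (pderiv 1 (quarticIV k a b c)) = 0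
        rw [evalD1]
      · show eval ![x₀, x₀*β, x₀*γ] (pderiv 2 (quarticIV k a b c)) = 0
        rw [evalD2]; linear_combination x₀^3*hγ + b*x₀^3*h2
end

section
/- Let k be a field of characteristic 2, α ∈ k, and let t be transcendental over k. Set z := t⁴ and y := t³ + α t in k(t). Then: (1) y⁴ = z³ + α⁴ z; (2) y² + α z + α³ = (t² + α)³ and y·(z + α²) = t·(t² + α)³, so that t = y(z + α²)/(y² + α z + α³) in k(t); (3) consequently k(t⁴, t³ + α t) = k(t). In particular the quartic curve y⁴ = z³ + α⁴ z is rational over k. -/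
open RatFunc Polynomial

lemma charTwo_ratFunc (k : Type*) [Field k] [CharP k 2] :
    (2 : RatFunc k) = 0 := by
  have : CharP (RatFunc k) 2 := charP_of_injective_algebraMap
    (algebraMap k (RatFunc k)).injective 2
  exact CharTwo.two_eq_zero

lemma mem_adjoin_of_algebraMap (k : Type*) [Field k]
    (F : IntermediateField k (RatFunc k)) (hX : RatFunc.X ∈ F) (p : k[X]) :
    algebraMap k[X] (RatFunc k) p ∈ F := by
  induction p using Polynomial.induction_on' with
  | add p q hp hq => rw [map_add]; exact add_mem hp hq
  | monomial n a =>
      rw [← Polynomial.C_mul_X_pow_eq_monomial, map_mul, map_pow,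
        RatFunc.algebraMap_C, RatFunc.algebraMap_X]
      exact mul_mem (F.algebraMap_mem a) (pow_mem hX n)

/-- In `k(t)` with `k` of characteristic 2, set `z = t⁴` and `y = t³ + α t`. Then
(1) `y⁴ = z³ + α⁴ z`; (2) `y² + α z + α³ = (t² + α)³` and `y (z + α²) = t (t² + α)³`,
so `t = y(z + α²)/(y² + α z + α³)`; (3) `k(t⁴, t³ + α t) = k(t)`, so the quartic
`y⁴ = z³ + α⁴ z` is rational. -/
theorem stmt_11 (k : Type*) [Field k] [CharP k 2] (α : k) :
    ∀ t z y : RatFunc k, t = RatFunc.X → z = t ^ 4 → y = t ^ 3 + RatFunc.C α * t →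
      y ^ 4 = z ^ 3 + RatFunc.C (α ^ 4) * z ∧
      y ^ 2 + RatFunc.C α * z + RatFunc.C (α ^ 3) = (t ^ 2 + RatFunc.C α) ^ 3 ∧
      y * (z + RatFunc.C (α ^ 2)) = t * (t ^ 2 + RatFunc.C α) ^ 3 ∧
      t = y * (z + RatFunc.C (α ^ 2)) / (y ^ 2 + RatFunc.C α * z + RatFunc.C (α ^ 3)) ∧
      IntermediateField.adjoin k {z, y} = (⊤ : IntermediateField k (RatFunc k)) := by
  intro t z y ht hz hy
  have h2 : (2 : RatFunc k) = 0 := charTwo_ratFunc k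
  -- (1)
  have e1 : y ^ 4 = z ^ 3 + RatFunc.C (α ^ 4) * z := by
    subst hz hy
    rw [map_pow]
    linear_combination (2 * RatFunc.C α * t ^ 10 + 3 * RatFunc.C α ^ 2 * t ^ 8 +
      2 * RatFunc.C α ^ 3 * t ^ 6) * h2
  -- (2)
  have e2 : y ^ 2 + RatFunc.C α * z + RatFunc.C (α ^ 3) = (t ^ 2 + RatFunc.C α) ^ 3 := by
    subst hz hy
    rw [map_pow]
    linear_combination (-(RatFunc.C α ^ 2 * t ^ 2)) * h2
  -- (3)
  have e3 : y * (z + RatFunc.C (α ^ 2)) = t * (t ^ 2 + RatFunc.C α) ^ 3 := by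
    subst hz hy
    rw [map_pow]
    linear_combination (-(RatFunc.C α * t ^ 5 + RatFunc.C α ^ 2 * t ^ 3)) * h2
  -- nonvanishing of t² + α
  have hne : t ^ 2 + RatFunc.C α ≠ 0 := by
    subst ht
    have : (RatFunc.X : RatFunc k) ^ 2 + RatFunc.C α
        = algebraMap k[X] (RatFunc k) (Polynomial.X ^ 2 + Polynomial.C α) := by
      rw [map_add, map_pow, RatFunc.algebraMap_C, RatFunc.algebraMap_X]
    rw [this]
    intro h
    have hp : (Polynomial.X ^ 2 + Polynomial.C α : k[X]) ≠ 0 := by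
      intro hp
      have := congrArg (Polynomial.coeff · 2) hp
      simp at this
    exact hp ((map_eq_zero_iff _ (IsFractionRing.injective k[X] (RatFunc k))).mp h)
  have hne3 : (t ^ 2 + RatFunc.C α) ^ 3 ≠ 0 := pow_ne_zero _ hne
  have e4 : t = y * (z + RatFunc.C (α ^ 2)) /
      (y ^ 2 + RatFunc.C α * z + RatFunc.C (α ^ 3)) := by
    rw [e2, e3, mul_div_assoc, div_self hne3, mul_one]
  refine ⟨e1, e2, e3, e4, ?_⟩
  -- (4) adjoin
  apply eq_top_iff.mpr
  set F := IntermediateField.adjoin k {z, y} with hF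
  have hzF : z ∈ F := IntermediateField.subset_adjoin k _ (Or.inl rfl)
  have hyF : y ∈ F := IntermediateField.subset_adjoin k _ (Or.inr rfl)
  have htF : t ∈ F := by
    rw [e4]
    exact div_mem (mul_mem hyF (add_mem hzF (F.algebraMap_mem (α ^ 2))))
      (add_mem (add_mem (pow_mem hyF 2) (mul_mem (F.algebraMap_mem α) hzF))
        (F.algebraMap_mem (α ^ 3)))
  intro f _
  have := mem_adjoin_of_algebraMap k F (ht ▸ htF)
  rw [← RatFunc.num_div_denom f]
  exact div_mem (this f.num) (this f.denom)
end

section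
/- Let K be a field of characteristic 2, and let a₀, a₂, c₀, c₂ ∈ K with a₂ ≠ 0. Let F = K(x, z, y) be a field generated over K by elements x, z, y satisfying z⁴ = a₀ + x + a₂ x² and y² = c₀ + z + c₂ z², with x transcendental over K. Then x is algebraic of degree at most 2 over K(z), the subfield K(z, y) has genus 0 (it is the function field of the conic y² + c₂z² + z + c₀ = 0, and equals K(y) if c₂ = 0), and [F : K(z, y)] ≤ 2. Hence F|K is not a non-hyperelliptic function field: F admits a subfield of genus 0 of index at most 2. -/
set_option maxHeartbeats 1000000
set_option synthInstance.maxHeartbeats 400000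

open IntermediateField Polynomial

/-- Hyperellipticity of the function fields `z⁴ = a₀ + x + a₂x²`, `y² = c₀ + z + c₂z²`
(char 2, `a₂ ≠ 0`): `x` is algebraic of degree ≤ 2 over `K(z)`; `K(z,y)` is the function
field of the conic `y² + c₂z² + z + c₀ = 0` (and equals `K(y)` when `c₂ = 0`); and
`[F : K(z,y)] ≤ 2`.  Hence `F|K` admits a genus-zero subfield of index at most 2 and is
not non-hyperelliptic. -/
theorem stmt_12 (K F : Type*) [Field K] [Field F] [Algebra K F] [CharP K 2]
    (a₀ a₂ c₀ c₂ : K) (ha₂ : a₂ ≠ 0) (x z y : F)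
    (hgen : IntermediateField.adjoin K {x, z, y} = (⊤ : IntermediateField K F))
    (hx : Transcendental K x)
    (hz : z ^ 4 = algebraMap K F a₀ + x + algebraMap K F a₂ * x ^ 2)
    (hy : y ^ 2 = algebraMap K F c₀ + z + algebraMap K F c₂ * z ^ 2) :
    (∃ q : Polynomial (↥(IntermediateField.adjoin K ({z} : Set F))),
        q ≠ 0 ∧ q.degree ≤ 2 ∧ Polynomial.aeval x q = 0) ∧
    (y ^ 2 + algebraMap K F c₂ * z ^ 2 + z + algebraMap K F c₀ = 0) ∧
    (c₂ = 0 → IntermediateField.adjoin K ({z, y} : Set F) =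
        IntermediateField.adjoin K ({y} : Set F)) ∧
    Module.rank (↥(IntermediateField.adjoin K ({z, y} : Set F))) F ≤ 2 := by
  have hinj : Function.Injective (algebraMap K F) := (algebraMap K F).injective
  have hcF : CharP F 2 := charP_of_injective_algebraMap hinj 2
  have h2 : (2 : F) = 0 := by exact_mod_cast CharP.cast_eq_zero F 2
  have ha₂F : algebraMap K F a₂ ≠ 0 := fun h => ha₂ (hinj (by simpa using h))
  refine ⟨?_, ?_, ?_, ?_⟩
  · -- quadratic over K(z)
    set A := IntermediateField.adjoin K ({z} : Set F) with hA
    have hzA : z ∈ A := mem_adjoin_simple_self K z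
    let b : A := ⟨algebraMap K F a₂, A.algebraMap_mem a₂⟩
    let c : A := ⟨algebraMap K F a₀ + z ^ 4,
      add_mem (A.algebraMap_mem a₀) (pow_mem hzA 4)⟩
    refine ⟨C b * X ^ 2 + X + C c, ?_, ?_, ?_⟩
    · intro h
      have hco := congrArg (fun r => r.coeff 2) h
      simp [coeff_C, coeff_X] at hco
      exact ha₂F (congrArg Subtype.val hco)
    · compute_degree
    · have : (algebraMap A F) b = algebraMap K F a₂ := rfl
      have : (algebraMap A F) c = algebraMap K F a₀ + z ^ 4 := rfl
      simp only [map_add, map_mul, map_pow, aeval_C, aeval_X]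
      show algebraMap A F b * x ^ 2 + x + algebraMap A F c = 0
      have hb' : (algebraMap A F) b = algebraMap K F a₂ := rfl
      have hc' : (algebraMap A F) c = algebraMap K F a₀ + z ^ 4 := rfl
      rw [hb', hc']
      linear_combination hz + (algebraMap K F a₂ * x ^ 2 + x + algebraMap K F a₀) * h2
  · linear_combination hy + (algebraMap K F c₂ * z ^ 2 + z + algebraMap K F c₀) * h2
  · intro hc
    have hy' : y ^ 2 = algebraMap K F c₀ + z := by rw [hy, hc]; simp
    apply le_antisymm
    · rw [adjoin_le_iff]
      intro w hw
      simp only [Set.mem_insert_iff, Set.mem_singleton_iff] at hw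
      rcases hw with h | h <;> rw [h]
      · have hz' : z = y ^ 2 + algebraMap K F c₀ := by
          linear_combination -hy' - algebraMap K F c₀ * h2
        rw [hz']
        exact add_mem (pow_mem (mem_adjoin_simple_self K y) 2)
          ((IntermediateField.adjoin K {y}).algebraMap_mem c₀)
      · exact mem_adjoin_simple_self K y
    · exact IntermediateField.adjoin.mono K _ _ (by simp)
  · -- index ≤ 2
    set L := IntermediateField.adjoin K ({z, y} : Set F) with hL
    have hzL : z ∈ L := subset_adjoin K _ (by simp)
    let b : L := ⟨algebraMap K F a₂, L.algebraMap_mem a₂⟩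
    have hb : b ≠ 0 := fun h => ha₂F (congrArg Subtype.val h)
    let c : L := ⟨algebraMap K F a₀ + z ^ 4,
      add_mem (L.algebraMap_mem a₀) (pow_mem hzL 4)⟩
    let p : Polynomial L := X ^ 2 + C b⁻¹ * X + C (b⁻¹ * c)
    have hpm : p.Monic := by
      unfold p; monicity!
    have hev : Polynomial.aeval x p = 0 := by
      unfold p
      simp only [map_add, map_mul, map_pow, aeval_C, aeval_X]
      have hb' : (algebraMap L F) b⁻¹ = (algebraMap K F a₂)⁻¹ := by
        push_cast [IntermediateField.coe_inv]; rfl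
      have hc' : (algebraMap L F) c = algebraMap K F a₀ + z ^ 4 := rfl
      rw [hb', hc']
      field_simp
      linear_combination hz + (algebraMap K F a₂ * x ^ 2 + x + algebraMap K F a₀) * h2
    have hint : IsIntegral L x := ⟨p, hpm, hev⟩
    have hdeg : (minpoly L x).degree ≤ 2 := by
      have := minpoly.degree_le_of_ne_zero L x hpm.ne_zero hev
      refine this.trans ?_
      unfold p
      compute_degree
    have htop : IntermediateField.adjoin L ({x} : Set F) = ⊤ := by
      apply IntermediateField.restrictScalars_injective K
      rw [IntermediateField.restrictScalars_top, adjoin_adjoin_left,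
        show ({z, y} ∪ {x} : Set F) = {x, z, y} by ext w; simp, hgen]
    have hfd : FiniteDimensional L (IntermediateField.adjoin L ({x} : Set F)) := by
      rw [show (IntermediateField.adjoin L ({x} : Set F)) = L⟮x⟯ from rfl]
      exact IntermediateField.adjoin.finiteDimensional hint
    have hfr : Module.finrank L (IntermediateField.adjoin L ({x} : Set F)) ≤ 2 := by
      rw [show (IntermediateField.adjoin L ({x} : Set F)) = L⟮x⟯ from rfl,
        IntermediateField.adjoin.finrank hint]
      exact Polynomial.natDegree_le_iff_degree_le.mpr hdeg
    calc Module.rank L F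
        = Module.rank L (⊤ : IntermediateField L F) :=
          (IntermediateField.topEquiv.toLinearEquiv.rank_eq).symm
      _ = Module.rank L (IntermediateField.adjoin L ({x} : Set F)) := by rw [htop]
      _ ≤ 2 := by
          rw [← Module.finrank_eq_rank]
          exact_mod_cast hfr
end

section
/- Let K be a field of characteristic 2 with A₂ ∈ K \ K², c₁ ∈ K \ {0}, and c₀, B₀, B₁ ∈ K. Let x be transcendental over K, set c(x) = c₀ + c₁x + x², A(x) = c₀A₂ + c₁⁻¹ + c₁A₂x + A₂x², and let z, y be elements of an extension field with z² = c(x)·A(x) and y² = c(x)·(B₀ + B₁x + z). Then [K(x,z) : K(x)] = 2 and [K(x,z,y) : K(x,z)] = 2, so [K(x,z,y) : K(x)] = 4. -/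
open IntermediateField Polynomial

theorem deg2_adjoin (L F : Type*) [Field L] [Field F] [Algebra L F]
    (a : L) (w : F) (hw : w ^ 2 = algebraMap L F a) (ha : ∀ t : L, t ^ 2 ≠ a) :
    IsIntegral L w ∧ Module.finrank L (adjoin L ({w} : Set F)) = 2 := by
  have hirr : Irreducible (X ^ 2 - C a) :=
    (X_pow_sub_C_irreducible_iff_of_prime Nat.prime_two).2 ha
  have hroot : Polynomial.aeval w (X ^ 2 - C a) = 0 := by simp [hw]
  have hmonic : (X ^ 2 - C a).Monic := monic_X_pow_sub_C a (by norm_num)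
  have hint : IsIntegral L w := ⟨X ^ 2 - C a, hmonic, hroot⟩
  have hmin : minpoly L w = X ^ 2 - C a :=
    (minpoly.eq_of_irreducible_of_monic hirr hroot hmonic).symm
  refine ⟨hint, ?_⟩
  rw [IntermediateField.adjoin.finrank hint, hmin, natDegree_X_pow_sub_C]

theorem decomp_adjoin (L F : Type*) [Field L] [Field F] [Algebra L F]
    (a : L) (w : F) (hw : w ^ 2 = algebraMap L F a) (hint : IsIntegral L w)
    {t : F} (ht : t ∈ adjoin L ({w} : Set F)) :
    ∃ u v : L, t = algebraMap L F u + algebraMap L F v * w := by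
  have h1 : t ∈ (adjoin L ({w} : Set F)).toSubalgebra := ht
  rw [adjoin_simple_toSubalgebra_of_isAlgebraic hint.isAlgebraic,
    Algebra.adjoin_singleton_eq_range_aeval] at h1
  obtain ⟨p, hp⟩ := h1
  obtain ⟨r, q, hdeg, hpq⟩ : ∃ r q : L[X], degree r ≤ 1 ∧ p = (X ^ 2 - C a) * q + r := by
    refine ⟨p %ₘ (X ^ 2 - C a), p /ₘ (X ^ 2 - C a), ?_, ?_⟩
    · have h := degree_modByMonic_lt p (monic_X_pow_sub_C a (two_ne_zero))
      rw [degree_X_pow_sub_C (by norm_num) a] at h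
      exact Order.le_of_lt_succ (by exact_mod_cast h)
    · rw [add_comm]
      exact (modByMonic_add_div p (X ^ 2 - C a)).symm
  refine ⟨r.coeff 0, r.coeff 1, ?_⟩
  have hr : r = C (r.coeff 1) * X + C (r.coeff 0) := (eq_X_add_C_of_degree_le_one hdeg)
  have h2 : t = Polynomial.aeval w p := hp.symm
  rw [h2, hpq, map_add, map_mul, map_sub, map_pow, aeval_X, aeval_C, hw]
  rw [sub_self, zero_mul, zero_add]
  conv_lhs => rw [hr]
  simp only [map_add, map_mul, aeval_C, aeval_X]
  ring_nf

theorem nonsq_ratfunc (K F : Type*) [Field K] [Field F] [Algebra K F]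
    (A₂ : K) (hA₂ : ¬ ∃ t : K, t ^ 2 = A₂) {x : F} (hx : Transcendental K x)
    (Pc PA : K[X]) (hPc : Pc.leadingCoeff = 1) (hPA : PA.leadingCoeff = A₂)
    {w : F} (hw : w ∈ adjoin K ({x} : Set F)) :
    w ^ 2 ≠ Polynomial.aeval x (Pc * PA) := by
  intro heq
  have hA₂0 : A₂ ≠ 0 := fun h => hA₂ ⟨0, by rw [h]; ring⟩
  have hinj : Function.Injective (Polynomial.aeval x : K[X] →ₐ[K] F) :=
    transcendental_iff_injective.mp hx
  have hPc0 : Pc ≠ 0 := fun h => by simp [h] at hPc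
  have hPA0 : PA ≠ 0 := fun h => hA₂0 (by simp [h] at hPA; exact hPA.symm)
  obtain ⟨f, g, hfg⟩ := (mem_adjoin_simple_iff K w).mp hw
  by_cases hg : Polynomial.aeval x g = 0
  · rw [hfg, hg, div_zero] at heq
    have : Pc * PA = 0 := hinj (by simpa using heq.symm)
    exact mul_ne_zero hPc0 hPA0 this
  · have hgne : g ≠ 0 := fun h => hg (by simp [h])
    have key : f ^ 2 = Pc * PA * g ^ 2 := by
      apply hinj
      have : (Polynomial.aeval x f) ^ 2 = Polynomial.aeval x (Pc * PA) *
          (Polynomial.aeval x g) ^ 2 := by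
        rw [← heq, hfg]; field_simp
      simpa [map_mul, map_pow] using this
    have hlc := congrArg leadingCoeff key
    rw [leadingCoeff_pow, leadingCoeff_mul, leadingCoeff_mul, leadingCoeff_pow,
      hPc, hPA, one_mul] at hlc
    have hglc : g.leadingCoeff ≠ 0 := leadingCoeff_ne_zero.mpr hgne
    refine hA₂ ⟨f.leadingCoeff * g.leadingCoeff⁻¹, ?_⟩
    field_simp
    linear_combination hlc

set_option maxHeartbeats 1000000 in
set_option synthInstance.maxHeartbeats 400000 in
/-- For the normal form `z² = c(x)A(x)`, `y² = c(x)(B₀ + B₁x + z)` in characteristic 2,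
with `A₂ ∉ K²` and `c₁ ≠ 0`: `[K(x,z) : K(x)] = 2`, `[K(x,z,y) : K(x,z)] = 2`, and hence
`[K(x,z,y) : K(x)] = 4`. -/
theorem stmt_13 (K F : Type*) [Field K] [Field F] [Algebra K F] [CharP K 2]
    (A₂ c₀ c₁ B₀ B₁ : K) (hA₂ : ¬ ∃ t : K, t ^ 2 = A₂) (hc₁ : c₁ ≠ 0)
    (x z y : F) (hx : Transcendental K x)
    (hz : z ^ 2 = (algebraMap K F c₀ + algebraMap K F c₁ * x + x ^ 2) *
        (algebraMap K F (c₀ * A₂) + algebraMap K F c₁⁻¹ +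
          algebraMap K F (c₁ * A₂) * x + algebraMap K F A₂ * x ^ 2))
    (hy : y ^ 2 = (algebraMap K F c₀ + algebraMap K F c₁ * x + x ^ 2) *
        (algebraMap K F B₀ + algebraMap K F B₁ * x + z)) :
    Module.finrank (↥(IntermediateField.adjoin K ({x} : Set F)))
        (↥(IntermediateField.adjoin (↥(IntermediateField.adjoin K ({x} : Set F)))
          ({z} : Set F))) = 2 ∧
    Module.finrank
        (↥(IntermediateField.adjoin (↥(IntermediateField.adjoin K ({x} : Set F)))
          ({z} : Set F)))
        (↥(IntermediateField.adjoin
          (↥(IntermediateField.adjoin (↥(IntermediateField.adjoin K ({x} : Set F)))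
            ({z} : Set F))) ({y} : Set F))) = 2 ∧
    Module.finrank (↥(IntermediateField.adjoin K ({x} : Set F)))
        (↥(IntermediateField.adjoin (↥(IntermediateField.adjoin K ({x} : Set F)))
          ({z, y} : Set F))) = 4 := by
  have hA₂0 : A₂ ≠ 0 := fun h => hA₂ ⟨0, by rw [h]; ring⟩
  have hinj : Function.Injective (Polynomial.aeval x : K[X] →ₐ[K] F) :=
    transcendental_iff_injective.mp hx
  have hCharF : CharP F 2 := charP_of_injective_algebraMap (algebraMap K F).injective 2
  set L := IntermediateField.adjoin K ({x} : Set F) with hL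
  set cF : F := algebraMap K F c₀ + algebraMap K F c₁ * x + x ^ 2 with hcF
  set AF : F := algebraMap K F (c₀ * A₂) + algebraMap K F c₁⁻¹ +
      algebraMap K F (c₁ * A₂) * x + algebraMap K F A₂ * x ^ 2 with hAF
  set BF : F := algebraMap K F B₀ + algebraMap K F B₁ * x with hBF
  -- polynomials
  set Pc : K[X] := C 1 * X ^ 2 + C c₁ * X + C c₀ with hPcdef
  set PA : K[X] := C A₂ * X ^ 2 + C (c₁ * A₂) * X + C (c₀ * A₂ + c₁⁻¹) with hPAdef
  have hPc : Pc.leadingCoeff = 1 := leadingCoeff_quadratic one_ne_zero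
  have hPA : PA.leadingCoeff = A₂ := leadingCoeff_quadratic hA₂0
  have haevc : Polynomial.aeval x Pc = cF := by
    simp only [hPcdef, map_add, map_mul, map_pow, aeval_C, aeval_X, hcF, map_one]
    ring
  have haevA : Polynomial.aeval x PA = AF := by
    simp only [hPAdef, map_add, map_mul, map_pow, aeval_C, aeval_X, hAF]
    ring
  have haev : Polynomial.aeval x (Pc * PA) = cF * AF := by
    rw [map_mul, haevc, haevA]
  -- memberships
  have hmapL : ∀ c : K, algebraMap K F c ∈ L := fun c => L.algebraMap_mem c
  have hxL : x ∈ L := mem_adjoin_simple_self K x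
  have hcFL : cF ∈ L := add_mem (add_mem (hmapL c₀) (mul_mem (hmapL c₁) hxL)) (pow_mem hxL 2)
  have hAFL : AF ∈ L := add_mem (add_mem (add_mem (hmapL _) (hmapL _))
    (mul_mem (hmapL _) hxL)) (mul_mem (hmapL _) (pow_mem hxL 2))
  have hBFL : BF ∈ L := add_mem (hmapL B₀) (mul_mem (hmapL B₁) hxL)
  -- step 1 nonsquare
  have nonsq1 : ∀ w ∈ L, w ^ 2 ≠ cF * AF := fun w hw heq =>
    nonsq_ratfunc K F A₂ hA₂ hx Pc PA hPc hPA hw (by rw [haev]; exact heq)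
  set aL : ↥L := ⟨cF * AF, mul_mem hcFL hAFL⟩ with haL
  have hz' : z ^ 2 = algebraMap ↥L F aL := hz
  have ha1 : ∀ t : ↥L, t ^ 2 ≠ aL := by
    intro t heq
    exact nonsq1 t t.2 (by
      have := congrArg (Subtype.val) heq
      push_cast at this
      exact this)
  obtain ⟨hint1, hfin1⟩ := deg2_adjoin ↥L F aL z hz' ha1
  set M := IntermediateField.adjoin ↥L ({z} : Set F) with hM
  have hznot : z ∉ L := fun h => nonsq1 z h hz
  have hcF0 : cF ≠ 0 := by
    rw [← haevc]
    intro h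
    have : Pc = 0 := hinj (by simpa using h)
    simp [this] at hPc
  have h2F : (2 : F) = 0 := by
    have := CharP.cast_eq_zero F 2
    exact_mod_cast this
  have nonsq2 : ∀ w ∈ M, w ^ 2 ≠ cF * (BF + z) := by
    intro w hw heq
    obtain ⟨u, v, huv⟩ := decomp_adjoin ↥L F aL z hz' hint1 hw
    have hw2 : w ^ 2 = (u : F) ^ 2 + (v : F) ^ 2 * (cF * AF) := by
      rw [huv]
      simp only [IntermediateField.algebraMap_apply]
      push_cast
      linear_combination ((v : F) ^ 2) * hz + ((u : F) * (v : F) * z) * h2F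
    apply hznot
    have hczL : cF * z ∈ L := by
      have h3 : cF * z = (u : F) ^ 2 + (v : F) ^ 2 * (cF * AF) - cF * BF := by
        rw [← hw2, heq]; ring
      rw [h3]
      exact sub_mem (add_mem (pow_mem u.2 2) (mul_mem (pow_mem v.2 2)
        (mul_mem hcFL hAFL))) (mul_mem hcFL hBFL)
    have h4 : z = cF⁻¹ * (cF * z) := by field_simp
    rw [h4]
    exact mul_mem (inv_mem hcFL) hczL
  have hLM : ∀ w ∈ L, w ∈ M := fun w hw => M.algebraMap_mem (⟨w, hw⟩ : ↥L)
  set aM : ↥M := ⟨cF * (BF + z), mul_mem (hLM cF hcFL)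
    (add_mem (hLM BF hBFL) (mem_adjoin_simple_self ↥L z))⟩ with haM
  have hy' : y ^ 2 = algebraMap ↥M F aM := hy
  have ha2 : ∀ t : ↥M, t ^ 2 ≠ aM := by
    intro t heq
    exact nonsq2 t t.2 (by
      have := congrArg (Subtype.val) heq
      push_cast at this
      exact this)
  obtain ⟨hint2, hfin2⟩ := deg2_adjoin ↥M F aM y hy' ha2
  refine ⟨hfin1, hfin2, ?_⟩
  set N := IntermediateField.adjoin ↥M ({y} : Set F) with hN
  have heqIF : IntermediateField.adjoin ↥L ({z, y} : Set F) = N.restrictScalars ↥L := by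
    rw [hN, hM, adjoin_adjoin_left, Set.singleton_union]
  rw [heqIF]
  have hmul : Module.finrank ↥L ↥M * Module.finrank ↥M ↥N = Module.finrank ↥L ↥N :=
    Module.finrank_mul_finrank ↥L ↥M ↥N
  have : Module.finrank ↥L ↥(N.restrictScalars ↥L) = Module.finrank ↥L ↥N := rfl
  rw [this, ← hmul, hfin1, hfin2]
end

section
/- Let K be a field of characteristic 2 and let c₀, c₁, A₂, B₀ ∈ K. Set c(X) = c₀ + c₁X + X² and A(X) = c₀A₂ + c₁⁻¹ + c₁A₂X + A₂X² (assuming c₁ ≠ 0). Then c(X + c₁) = c(X) and A(X + c₁) = A(X) in K[X]. Consequently, for a function field F = K(x, z, y) with z² = c(x)A(x) and y² = c(x)·(B₀ + z) (i.e., with B₁ = 0), the substitution (x, z, y) ↦ (x + c₁, z, y) defines a K-automorphism of F of order 2. -/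
open Polynomial

/-- With `c(X) = c₀ + c₁X + X²` and `A(X) = c₀A₂ + c₁⁻¹ + c₁A₂X + A₂X²` over a field of
characteristic 2 with `c₁ ≠ 0`, one has `c(X + c₁) = c(X)` and `A(X + c₁) = A(X)`.
Consequently, for `F = K(x,z,y)` with `z² = c(x)A(x)` and `y² = c(x)(B₀ + z)`, the
substitution `(x,z,y) ↦ (x + c₁, z, y)` is a `K`-automorphism of `F` of order 2. -/
theorem stmt_14 (K : Type*) [Field K] [CharP K 2] (c₀ c₁ A₂ B₀ : K) (hc₁ : c₁ ≠ 0) :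
    ((C c₀ + C c₁ * X + X ^ 2 : K[X]).comp (X + C c₁) = C c₀ + C c₁ * X + X ^ 2) ∧
    ((C (c₀ * A₂) + C c₁⁻¹ + C (c₁ * A₂) * X + C A₂ * X ^ 2 : K[X]).comp (X + C c₁) =
      C (c₀ * A₂) + C c₁⁻¹ + C (c₁ * A₂) * X + C A₂ * X ^ 2) ∧
    (∀ (F : Type) [Field F] [Algebra K F], ∀ x z y : F,
      Transcendental K x →
      IntermediateField.adjoin K ({x, z, y} : Set F) = (⊤ : IntermediateField K F) →
      z ^ 2 = (algebraMap K F c₀ + algebraMap K F c₁ * x + x ^ 2) *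
          (algebraMap K F (c₀ * A₂) + algebraMap K F c₁⁻¹ +
            algebraMap K F (c₁ * A₂) * x + algebraMap K F A₂ * x ^ 2) →
      y ^ 2 = (algebraMap K F c₀ + algebraMap K F c₁ * x + x ^ 2) *
          (algebraMap K F B₀ + z) →
      ∃ σ : F ≃ₐ[K] F, σ x = x + algebraMap K F c₁ ∧ σ z = z ∧ σ y = y ∧
        orderOf σ = 2) := by
  have h2K : (2 : K[X]) = 0 := by
    have : ((2 : ℕ) : K[X]) = 0 := CharP.cast_eq_zero K[X] 2
    simpa using this
  have part1 : (C c₀ + C c₁ * X + X ^ 2 : K[X]).comp (X + C c₁)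
      = C c₀ + C c₁ * X + X ^ 2 := by
    simp only [add_comp, mul_comp, X_comp, C_comp, pow_comp]
    linear_combination (C c₁ * X + C c₁ ^ 2) * h2K
  have part2 : (C (c₀ * A₂) + C c₁⁻¹ + C (c₁ * A₂) * X + C A₂ * X ^ 2 : K[X]).comp (X + C c₁)
      = C (c₀ * A₂) + C c₁⁻¹ + C (c₁ * A₂) * X + C A₂ * X ^ 2 := by
    simp only [add_comp, mul_comp, X_comp, C_comp, pow_comp, map_mul]
    linear_combination (C c₁ * C A₂ * X + C c₁ ^ 2 * C A₂) * h2K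
  refine ⟨part1, part2, ?_⟩
  intro F _ _ x z y hTx hadj hz hy
  haveI : CharP F 2 := charP_of_injective_algebraMap (algebraMap K F).injective 2
  -- basic characteristic-two facts in `F`
  have hpow2 : ∀ a b : F, (a + b) ^ 2 = a ^ 2 + b ^ 2 := fun a b => add_pow_char a b 2
  have hpow4 : ∀ a b : F, (a + b) ^ 4 = a ^ 4 + b ^ 4 := by
    intro a b
    have h1 : (a + b) ^ 4 = ((a + b) ^ 2) ^ 2 := by ring
    rw [h1, hpow2, hpow2]
    ring
  have hinj4 : ∀ a b : F, a ^ 4 = b ^ 4 → a = b := by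
    intro a b hab
    have h0 : (a + b) ^ 4 = 0 := by
      rw [hpow4, hab, ← two_mul, CharTwo.two_eq_zero, zero_mul]
    have h1 : a + b = 0 := by
      exact pow_eq_zero_iff (by norm_num) |>.mp h0
    have := CharTwo.neg_eq (R := F) b
    linear_combination h1 + this
  -- the generic "intermediate field generated by x,z,y is everything" principle
  have key : ∀ (S : Set F), (∀ k : K, algebraMap K F k ∈ S) →
      (∀ a b : F, a ∈ S → b ∈ S → a + b ∈ S) →
      (∀ a b : F, a ∈ S → b ∈ S → a * b ∈ S) →
      (∀ a : F, a ∈ S → a⁻¹ ∈ S) →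
      x ∈ S → z ∈ S → y ∈ S → ∀ a : F, a ∈ S := by
    intro S halg hadd hmul hinv hxS hzS hyS a
    let T : IntermediateField K F :=
      { carrier := S
        mul_mem' := fun ha hb => hmul _ _ ha hb
        one_mem' := by simpa using halg 1
        add_mem' := fun ha hb => hadd _ _ ha hb
        zero_mem' := by simpa using halg 0
        algebraMap_mem' := halg
        inv_mem' := fun a ha => hinv a ha }
    have hle : IntermediateField.adjoin K ({x, z, y} : Set F) ≤ T := by
      rw [IntermediateField.adjoin_le_iff]
      intro t ht
      simp only [Set.mem_insert_iff, Set.mem_singleton_iff] at ht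
      rcases ht with rfl | rfl | rfl <;> assumption
    have hmem : a ∈ IntermediateField.adjoin K ({x, z, y} : Set F) := by
      rw [hadj]; exact IntermediateField.mem_top
    exact hle hmem
  -- the polynomials
  set Pc : K[X] := C c₀ + C c₁ * X + X ^ 2 with hPcdef
  set Pa : K[X] := C (c₀ * A₂) + C c₁⁻¹ + C (c₁ * A₂) * X + C A₂ * X ^ 2 with hPadef
  have hz2 : z ^ 2 = aeval x (Pc * Pa) := by
    rw [hz, hPcdef, hPadef]
    simp only [map_add, map_mul, map_pow, aeval_C, aeval_X]
  have hzm : z ^ 2 = aeval x Pc * aeval x Pa := by rw [hz2, map_mul]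
  have hy2 : y ^ 2 = aeval x Pc * (algebraMap K F B₀ + z) := by
    rw [hy, hPcdef]
    simp only [map_add, map_mul, map_pow, aeval_C, aeval_X]
  -- transcendence of x and x + c₁
  have hvinj0 : Function.Injective (aeval x : K[X] →ₐ[K] F) :=
    transcendental_iff_injective.mp hTx
  have hTx' : Transcendental K (x + algebraMap K F c₁) := by
    intro halg
    apply hTx
    have h1 : IsIntegral K (x + algebraMap K F c₁) := (isAlgebraic_iff_isIntegral).mp halg
    have h2 : IsIntegral K (algebraMap K F c₁) := isIntegral_algebraMap
    have h3 : IsIntegral K x := by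
      have := h1.sub h2
      simpa using this
    exact h3.isAlgebraic
  have hwinj0 : Function.Injective (aeval (x + algebraMap K F c₁) : K[X] →ₐ[K] F) :=
    transcendental_iff_injective.mp hTx'
  -- the embeddings K(x) → F and K(x+c₁) → F
  set v : RatFunc K →ₐ[K] F := RatFunc.liftAlgHom (aeval x)
    (nonZeroDivisors_le_comap_nonZeroDivisors_of_injective _ hvinj0) with hvdef
  set w : RatFunc K →ₐ[K] F := RatFunc.liftAlgHom (aeval (x + algebraMap K F c₁))
    (nonZeroDivisors_le_comap_nonZeroDivisors_of_injective _ hwinj0) with hwdef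
  have hv : ∀ p : K[X], v (algebraMap K[X] (RatFunc K) p) = aeval x p := by
    intro p
    have := RatFunc.liftAlgHom_apply_div' (aeval x : K[X] →ₐ[K] F)
      (nonZeroDivisors_le_comap_nonZeroDivisors_of_injective _ hvinj0) p 1
    simpa using this
  have hw : ∀ p : K[X], w (algebraMap K[X] (RatFunc K) p) = aeval (x + algebraMap K F c₁) p := by
    intro p
    have := RatFunc.liftAlgHom_apply_div' (aeval (x + algebraMap K F c₁) : K[X] →ₐ[K] F)
      (nonZeroDivisors_le_comap_nonZeroDivisors_of_injective _ hwinj0) p 1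
    simpa using this
  have hvinj : Function.Injective v := RatFunc.liftAlgHom_injective _ hvinj0
  -- key polynomial computations
  have hy4 : y ^ 4 = aeval x (Pc ^ 2 * (C B₀ ^ 2 + Pc * Pa)) := by
    have h2 : aeval x (Pc ^ 2 * (C B₀ ^ 2 + Pc * Pa))
        = (aeval x Pc) ^ 2 * ((algebraMap K F B₀) ^ 2 + aeval x Pc * aeval x Pa) := by
      simp only [map_add, map_mul, map_pow, aeval_C]
    have h1 : y ^ 4 = (y ^ 2) ^ 2 := by ring
    rw [h2, h1, hy2, mul_pow, hpow2, hzm]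
  have hz4 : z ^ 4 = aeval x ((Pc * Pa) ^ 2) := by
    have h1 : z ^ 4 = (z ^ 2) ^ 2 := by ring
    rw [h1, hz2, map_pow]
  -- every fourth power lies in the image of v
  have h4 : ∀ a : F, ∃ r : RatFunc K, v r = a ^ 4 := by
    apply key
    · intro k
      exact ⟨algebraMap K (RatFunc K) (k ^ 4), by rw [AlgHom.commutes, map_pow]⟩
    · rintro a b ⟨r, hr⟩ ⟨s, hs⟩
      exact ⟨r + s, by rw [map_add, hr, hs, hpow4]⟩
    · rintro a b ⟨r, hr⟩ ⟨s, hs⟩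
      exact ⟨r * s, by rw [map_mul, hr, hs, mul_pow]⟩
    · rintro a ⟨r, hr⟩
      exact ⟨r⁻¹, by rw [map_inv₀, hr, inv_pow]⟩
    · exact ⟨algebraMap K[X] (RatFunc K) (X ^ 4), by rw [hv]; simp⟩
    · exact ⟨algebraMap K[X] (RatFunc K) ((Pc * Pa) ^ 2), by rw [hv, hz4]⟩
    · exact ⟨algebraMap K[X] (RatFunc K) (Pc ^ 2 * (C B₀ ^ 2 + Pc * Pa)), by rw [hv, hy4]⟩
  -- define g with v (g a) = a ^ 4, and f = w ∘ g
  obtain ⟨g, hg⟩ := Classical.axiomOfChoice h4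
  set f : F → F := fun a => w (g a) with hfdef
  have hgadd : ∀ a b : F, g (a + b) = g a + g b := fun a b =>
    hvinj (by rw [map_add, hg, hg, hg, hpow4])
  have hgmul : ∀ a b : F, g (a * b) = g a * g b := fun a b =>
    hvinj (by rw [map_mul, hg, hg, hg, mul_pow])
  have hginv : ∀ a : F, g a⁻¹ = (g a)⁻¹ := fun a =>
    hvinj (by rw [map_inv₀, hg, hg, inv_pow])
  have hgone : g 1 = 1 := hvinj (by rw [hg, map_one, one_pow])
  have hgalg : ∀ k : K, g (algebraMap K F k) = algebraMap K (RatFunc K) (k ^ 4) := fun k =>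
    hvinj (by rw [hg, AlgHom.commutes, map_pow])
  have hfadd : ∀ a b : F, f (a + b) = f a + f b := fun a b => by
    simp only [hfdef]; rw [hgadd, map_add]
  have hfmul : ∀ a b : F, f (a * b) = f a * f b := fun a b => by
    simp only [hfdef]; rw [hgmul, map_mul]
  have hfinv : ∀ a : F, f a⁻¹ = (f a)⁻¹ := fun a => by
    simp only [hfdef]; rw [hginv, map_inv₀]
  have hfone : f 1 = 1 := by simp only [hfdef]; rw [hgone, map_one]
  have hfalg : ∀ k : K, f (algebraMap K F k) = (algebraMap K F k) ^ 4 := fun k => by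
    simp only [hfdef]; rw [hgalg, AlgHom.commutes, map_pow]
  -- compute f on the generators, using invariance of Pc and Pa under X ↦ X + c₁
  have haevalshift : ∀ p : K[X], aeval (x + algebraMap K F c₁) p
      = aeval x (p.comp (X + C c₁)) := by
    intro p
    rw [aeval_comp]
    simp
  have hcompPcPa : ((Pc * Pa) : K[X]).comp (X + C c₁) = Pc * Pa := by
    rw [mul_comp, part1, part2]
  have hfx : f x = (x + algebraMap K F c₁) ^ 4 := by
    have hgx : g x = algebraMap K[X] (RatFunc K) (X ^ 4) :=
      hvinj (by rw [hg, hv]; simp)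
    simp only [hfdef]; rw [hgx, hw]; simp
  have hfz : f z = z ^ 4 := by
    have hgz : g z = algebraMap K[X] (RatFunc K) ((Pc * Pa) ^ 2) :=
      hvinj (by rw [hg, hv, hz4])
    simp only [hfdef]
    rw [hgz, hw, haevalshift, pow_comp, hcompPcPa, ← hz4]
  have hfy : f y = y ^ 4 := by
    have hgy : g y = algebraMap K[X] (RatFunc K) (Pc ^ 2 * (C B₀ ^ 2 + Pc * Pa)) :=
      hvinj (by rw [hg, hv, hy4])
    simp only [hfdef]
    rw [hgy, hw, haevalshift, mul_comp, pow_comp, part1, add_comp, pow_comp, C_comp,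
      mul_comp, part1, part2, ← hy4]
  -- every value of f is a fourth power
  have h5 : ∀ a : F, ∃ b : F, b ^ 4 = f a := by
    apply key
    · intro k
      exact ⟨algebraMap K F k, (hfalg k).symm⟩
    · rintro a b ⟨r, hr⟩ ⟨s, hs⟩
      exact ⟨r + s, by rw [hpow4, hr, hs, hfadd]⟩
    · rintro a b ⟨r, hr⟩ ⟨s, hs⟩
      exact ⟨r * s, by rw [mul_pow, hr, hs, hfmul]⟩
    · rintro a ⟨r, hr⟩
      exact ⟨r⁻¹, by rw [inv_pow, hr, hfinv]⟩
    · exact ⟨x + algebraMap K F c₁, hfx.symm⟩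
    · exact ⟨z, hfz.symm⟩
    · exact ⟨y, hfy.symm⟩
  obtain ⟨σ, hσ⟩ := Classical.axiomOfChoice h5
  -- σ is a K-algebra homomorphism
  have hσadd : ∀ a b : F, σ (a + b) = σ a + σ b := fun a b =>
    hinj4 _ _ (by rw [hσ, hfadd, ← hσ, ← hσ, hpow4])
  have hσmul : ∀ a b : F, σ (a * b) = σ a * σ b := fun a b =>
    hinj4 _ _ (by rw [hσ, hfmul, ← hσ, ← hσ, mul_pow])
  have hσone : σ 1 = 1 := hinj4 _ _ (by rw [hσ, hfone, one_pow])
  have hσalg : ∀ k : K, σ (algebraMap K F k) = algebraMap K F k := fun k =>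
    hinj4 _ _ (by rw [hσ, hfalg])
  have hσzero : σ 0 = 0 := by
    have := hσadd 0 0
    simpa using this
  let σA : F →ₐ[K] F :=
    { toFun := σ
      map_one' := hσone
      map_mul' := hσmul
      map_zero' := hσzero
      map_add' := hσadd
      commutes' := hσalg }
  have hσAx : σA x = x + algebraMap K F c₁ := hinj4 _ _ (by
    show σ x ^ 4 = _
    rw [hσ, hfx])
  have hσAz : σA z = z := hinj4 _ _ (by
    show σ z ^ 4 = _
    rw [hσ, hfz])
  have hσAy : σA y = y := hinj4 _ _ (by
    show σ y ^ 4 = _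
    rw [hσ, hfy])
  have hσAfix : σA (x + algebraMap K F c₁) = x := by
    rw [map_add, hσAx, AlgHom.commutes, add_assoc, CharTwo.add_self_eq_zero, add_zero]
  -- σA is surjective
  have hsurj : Function.Surjective σA := by
    intro a
    refine key (Set.range σA) ?_ ?_ ?_ ?_ ?_ ?_ ?_ a
    · intro k; exact ⟨algebraMap K F k, AlgHom.commutes _ _⟩
    · rintro _ _ ⟨r, rfl⟩ ⟨s, rfl⟩; exact ⟨r + s, map_add _ _ _⟩
    · rintro _ _ ⟨r, rfl⟩ ⟨s, rfl⟩; exact ⟨r * s, map_mul _ _ _⟩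
    · rintro _ ⟨r, rfl⟩; exact ⟨r⁻¹, map_inv₀ _ _⟩
    · exact ⟨x + algebraMap K F c₁, hσAfix⟩
    · exact ⟨z, hσAz⟩
    · exact ⟨y, hσAy⟩
  let σE : F ≃ₐ[K] F := AlgEquiv.ofBijective σA ⟨σA.toRingHom.injective, hsurj⟩
  have hσEapp : ∀ a : F, σE a = σA a := fun a => rfl
  -- σA is an involution
  have hinvol : ∀ a : F, σA (σA a) = a := by
    intro a
    refine key {t : F | σA (σA t) = t} (fun k => ?_) (fun s t hs ht => ?_)
      (fun s t hs ht => ?_) (fun s hs => ?_) ?_ ?_ ?_ a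
    · show σA (σA (algebraMap K F k)) = _
      rw [AlgHom.commutes, AlgHom.commutes]
    · show σA (σA (s + t)) = s + t
      simp only [Set.mem_setOf_eq] at hs ht
      rw [map_add, map_add, hs, ht]
    · show σA (σA (s * t)) = s * t
      simp only [Set.mem_setOf_eq] at hs ht
      rw [map_mul, map_mul, hs, ht]
    · show σA (σA s⁻¹) = s⁻¹
      simp only [Set.mem_setOf_eq] at hs
      rw [map_inv₀, map_inv₀, hs]
    · show σA (σA x) = x
      rw [hσAx, hσAfix]
    · show σA (σA z) = z
      rw [hσAz, hσAz]
    · show σA (σA y) = y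
      rw [hσAy, hσAy]
  have hc₁' : algebraMap K F c₁ ≠ 0 := fun h => hc₁ ((algebraMap K F).injective (by simpa using h))
  refine ⟨σE, by rw [hσEapp, hσAx], by rw [hσEapp, hσAz], by rw [hσEapp, hσAy], ?_⟩
  have hsq : σE ^ 2 = 1 := by
    ext a
    rw [pow_two, AlgEquiv.mul_apply, AlgEquiv.one_apply, hσEapp, hσEapp]
    exact hinvol a
  have hne : σE ≠ 1 := by
    intro h
    have hx1 : σE x = x := by rw [h]; rfl
    rw [hσEapp, hσAx] at hx1
    exact hc₁' (add_eq_left.mp hx1)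
  exact orderOf_eq_prime hsq hne
end

section
/- Let K be a field of characteristic 2, let r and s be the two roots, in the separable closure L of K, of the separable polynomial x² + c₁x + c₀ ∈ K[x] with c₁ ≠ 0, and let f ∈ K[x] be any polynomial. If f(r) and f(s) are squares in L, then f(r) + f(s) ∈ K² and r²·f(r) + s²·f(s) ∈ K². -/
open Polynomial

/-- If `w² ∈ K` and `w` lies in a separable extension of a char-2 field `K`,
then `w ∈ K`. -/
lemma aux_sq_mem (K L : Type*) [Field K] [Field L] [Algebra K L] [CharP K 2]
    [Algebra.IsSeparable K L] (w : L) (k : K) (h : w ^ 2 = algebraMap K L k) :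
    ∃ t : K, algebraMap K L t = w := by
  have hint : IsIntegral K w := Algebra.IsSeparable.isIntegral K w
  set p := minpoly K w with hp
  have hq : (X ^ 2 - C k : K[X]).Monic := Polynomial.monic_X_pow_sub_C k (by norm_num)
  have hqz : aeval w (X ^ 2 - C k : K[X]) = 0 := by simp [h]
  have hdvd : p ∣ X ^ 2 - C k := minpoly.dvd K w hqz
  have hqne : (X ^ 2 - C k : K[X]) ≠ 0 := hq.ne_zero
  have hdle : p.natDegree ≤ 2 := by
    have h1 := Polynomial.natDegree_le_of_dvd hdvd hqne
    rwa [Polynomial.natDegree_X_pow_sub_C] at h1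
  have hdpos : 0 < p.natDegree := minpoly.natDegree_pos hint
  have hsep : p.Separable := Algebra.IsSeparable.isSeparable K w
  have hd1 : p.natDegree = 1 := by
    rcases Nat.lt_or_ge p.natDegree 2 with h2 | h2
    · omega
    · exfalso
      have hpq : p = X ^ 2 - C k := by
        refine Polynomial.eq_of_dvd_of_natDegree_le_of_leadingCoeff hdvd ?_ ?_
        · rw [Polynomial.natDegree_X_pow_sub_C]; exact h2
        · rw [(minpoly.monic hint).leadingCoeff, hq.leadingCoeff]
      have hirr : Irreducible p := minpoly.irreducible hint
      have hder := (Polynomial.separable_iff_derivative_ne_zero hirr).mp hsep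
      apply hder
      rw [hpq]
      have h2K : (2 : K) = 0 := by have := CharP.cast_eq_zero K 2; simpa using this
      simp [Polynomial.derivative_X_pow, h2K, one_add_one_eq_two]
  have hpform : p = X + C (p.coeff 0) := (minpoly.monic hint).eq_X_add_C hd1
  have haev := minpoly.aeval K w
  rw [← hp, hpform] at haev
  simp only [map_add, aeval_X, aeval_C] at haev
  exact ⟨-p.coeff 0, by rw [map_neg]; linear_combination -haev⟩

/-- The symmetric-function argument: let `K` have characteristic 2 with separable
(algebraic) extension `L`, let `r ≠ s` in `L` be the roots of the separable polynomial
`x² + c₁x + c₀ ∈ K[x]` (`c₁ ≠ 0`), and let `f ∈ K[x]`.  If `f(r)` and `f(s)` are squares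
in `L`, then `f(r) + f(s)` and `r²f(r) + s²f(s)` lie in `K²` (i.e. they come from squares
in `K`). -/
theorem stmt_16 (K L : Type*) [Field K] [Field L] [Algebra K L] [CharP K 2]
    [Algebra.IsSeparable K L] (c₀ c₁ : K) (hc₁ : c₁ ≠ 0) (r s : L) (hrs : r ≠ s)
    (hr : r ^ 2 + algebraMap K L c₁ * r + algebraMap K L c₀ = 0)
    (hs : s ^ 2 + algebraMap K L c₁ * s + algebraMap K L c₀ = 0)
    (f : Polynomial K)
    (hfr : ∃ u : L, u ^ 2 = Polynomial.aeval r f)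
    (hfs : ∃ u : L, u ^ 2 = Polynomial.aeval s f) :
    (∃ t : K, algebraMap K L (t ^ 2) = Polynomial.aeval r f + Polynomial.aeval s f) ∧
    (∃ t : K, algebraMap K L (t ^ 2) =
      r ^ 2 * Polynomial.aeval r f + s ^ 2 * Polynomial.aeval s f) := by
  obtain ⟨u, hu⟩ := hfr
  obtain ⟨v, hv⟩ := hfs
  have h2K : (2 : K) = 0 := by have := CharP.cast_eq_zero K 2; simpa using this
  have h2L : (2 : L) = 0 := by
    rw [show (2 : L) = algebraMap K L 2 from (map_ofNat _ 2).symm, h2K, map_zero]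
  -- r + s = -c₁
  have hsum : r + s = -algebraMap K L c₁ := by
    have hfac : (r - s) * (r + s + algebraMap K L c₁) = 0 := by linear_combination hr - hs
    rcases mul_eq_zero.mp hfac with h | h
    · exact absurd (sub_eq_zero.mp h) hrs
    · linear_combination h
  have hs2 : s = -algebraMap K L c₁ - r := by linear_combination hsum
  -- division by g
  set g : K[X] := X ^ 2 + C c₁ * X + C c₀ with hg
  have hgm : g.Monic := by
    rw [hg, add_assoc]
    apply Polynomial.monic_X_pow_add
    have h1 : (C c₁ * X + C c₀ : K[X]).degree ≤ 1 := by
      apply le_trans (Polynomial.degree_add_le _ _)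
      simp only [sup_le_iff]
      constructor
      · exact le_trans (Polynomial.degree_mul_le _ _) (by
          simpa using add_le_add Polynomial.degree_C_le (le_refl (1 : WithBot ℕ)))
      · exact Polynomial.degree_C_le.trans (by norm_num)
    exact lt_of_le_of_lt h1 (by norm_num)
  set m : K[X] := f %ₘ g with hm
  have hng : g.natDegree = 2 := by
    rw [hg]; compute_degree!
  have hdm : m.natDegree ≤ 1 := by
    have h1 := Polynomial.natDegree_modByMonic_lt f hgm (by
      intro hone; rw [hone] at hng; simp at hng)
    rw [hng] at h1
    rw [hm]
    omega
  have hmform : m = C (m.coeff 1) * X + C (m.coeff 0) :=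
    Polynomial.eq_X_add_C_of_natDegree_le_one hdm
  set a := m.coeff 0
  set b := m.coeff 1
  set A := algebraMap K L a
  set B := algebraMap K L b
  have hgr : aeval r g = 0 := by rw [hg]; simpa using hr
  have hgs : aeval s g = 0 := by rw [hg]; simpa using hs
  have heval : ∀ x : L, aeval x g = 0 → aeval x f = algebraMap K L b * x + algebraMap K L a := by
    intro x hx
    conv_lhs => rw [← Polynomial.modByMonic_add_div f g]
    rw [map_add, map_mul, hx, zero_mul, add_zero, ← hm]
    conv_lhs => rw [hmform]
    simp
  have hfr' : aeval r f = B * r + A := heval r hgr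
  have hfs' : aeval s f = B * s + A := heval s hgs
  constructor
  · -- f(r) + f(s) = b·c₁ ∈ K
    have hk1 : algebraMap K L (c₁ * b) = aeval r f + aeval s f := by
      rw [hfr', hfs', hs2, map_mul]
      linear_combination (B * algebraMap K L c₁ - A) * h2L
    have hw : (u + v) ^ 2 = algebraMap K L (c₁ * b) := by
      rw [hk1, ← hu, ← hv]
      linear_combination (u * v) * h2L
    obtain ⟨t, ht⟩ := aux_sq_mem K L (u + v) (c₁ * b) hw
    exact ⟨t, by rw [map_pow, ht, hw]; exact hk1⟩
  · -- r²f(r) + s²f(s) = c₁³b + c₁²a + c₁c₀b ∈ K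
    have hk2 : algebraMap K L (c₁ ^ 3 * b + c₁ ^ 2 * a + c₁ * c₀ * b)
        = r ^ 2 * aeval r f + s ^ 2 * aeval s f := by
      rw [hfr', hfs', hs2]
      push_cast [map_add, map_mul, map_pow]
      linear_combination (3 * B * algebraMap K L c₁ - 2 * A) * hr +
        (A * algebraMap K L c₀ + B * (algebraMap K L c₁) ^ 3
          - B * algebraMap K L c₁ * algebraMap K L c₀) * h2L
    have hprod : r * s = algebraMap K L c₀ := by
      rw [hs2]; linear_combination -hr - r * hsum + r * hs2
    have hw : (r * u + s * v) ^ 2 = algebraMap K L (c₁ ^ 3 * b + c₁ ^ 2 * a + c₁ * c₀ * b) := by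
      rw [hk2, ← hu, ← hv]
      linear_combination (r * s * u * v) * h2L
    obtain ⟨t, ht⟩ := aux_sq_mem K L (r * u + s * v) _ hw
    exact ⟨t, by rw [map_pow, ht, hw]; exact hk2⟩
end
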